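/- arXiv:2502.11222 — 4 statements merged into one kernel-verified Lean document; each statement's English description precedes it below -/
import Mathlib

section
/- The element 8 + 3√7 is a totally positive unit in the ring of integers of ℚ(√7) and is not a square in ℚ₃ (under the embedding of ℚ(√7) into ℚ₃ given by a 3-adic square root of 7). -/
/-!
A 3-adic square root of 7 is a 3-adic integer, so a square root of `8 + 3√7` in `ℚ₃` would lie
in `ℤ₃` and reduce to a square root of `8 ≡ 2` modulo 3, which does not exist.
-/

instance : Fact (Nat.Prime 3) := ⟨by norm_num⟩

theorem isIntegral_sqrt_natCast (n : ℕ) : IsIntegral ℤ (Real.sqrt n) :=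
  IsIntegral.of_pow two_pos <| by
    rw [Real.sq_sqrt n.cast_nonneg]; exact isIntegral_natCast n

namespace PadicInt

variable {p : ℕ} [Fact p.Prime]

theorem isSquare_coe_iff {x : ℤ_[p]} : IsSquare (x : ℚ_[p]) ↔ IsSquare x := by
  refine ⟨fun ⟨y, hy⟩ => ?_, fun hx => hx.map (Coe.ringHom (p := p))⟩
  have hy_le : ‖y‖ ≤ 1 := by
    rw [← pow_le_one_iff_of_nonneg (norm_nonneg y) two_ne_zero, ← norm_pow, sq, ← hy]
    exact x.norm_le_one
  exact ⟨⟨y, hy_le⟩, Subtype.ext hy⟩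

theorem not_isSquare_intCast_add_prime_mul {a : ℤ} (ha : ¬IsSquare (a : ZMod p)) (t : ℤ_[p]) :
    ¬IsSquare ((a : ℤ_[p]) + p * t) := fun h => ha <| by
  simpa using h.map (toZMod (p := p))

end PadicInt

theorem Padic.norm_le_one_of_sq_eq_intCast {p : ℕ} [Fact p.Prime] {s : ℚ_[p]} {n : ℤ}
    (hs : s ^ 2 = n) : ‖s‖ ≤ 1 := by
  rw [← pow_le_one_iff_of_nonneg (norm_nonneg s) two_ne_zero, ← norm_pow, hs]
  exact Padic.norm_int_le_one n

/-- `8 + 3√7` is a totally positive unit in the ring of integers of `ℚ(√7)`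
(both real conjugates `8 ± 3√7` are positive, both are algebraic integers, and
their product is `1`), and it is not a square in `ℚ₃` under any embedding
sending `√7` to a 3-adic square root of `7`. -/
theorem eight_add_three_sqrt7_totally_positive_unit_not_square_in_Qp3 :
    (0 < 8 + 3 * Real.sqrt 7) ∧ (0 < 8 - 3 * Real.sqrt 7) ∧
      IsIntegral ℤ (8 + 3 * Real.sqrt 7) ∧ IsIntegral ℤ (8 - 3 * Real.sqrt 7) ∧
      (8 + 3 * Real.sqrt 7) * (8 - 3 * Real.sqrt 7) = 1 ∧
      ∀ s : ℚ_[3], s ^ 2 = 7 → ¬∃ y : ℚ_[3], 8 + 3 * s = y ^ 2 := by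
  have h7 : Real.sqrt 7 ^ 2 = 7 := Real.sq_sqrt (by norm_num)
  have hint : IsIntegral ℤ (Real.sqrt 7) := by exact_mod_cast isIntegral_sqrt_natCast 7
  refine ⟨by positivity, by nlinarith [Real.sqrt_nonneg 7], ?_, ?_, by linear_combination -9 * h7, ?_⟩
  · exact (isIntegral_natCast 8).add ((isIntegral_natCast 3).mul hint)
  · exact (isIntegral_natCast 8).sub ((isIntegral_natCast 3).mul hint)
  rintro s hs ⟨y, hy⟩
  let t : ℤ_[3] := ⟨s, Padic.norm_le_one_of_sq_eq_intCast (n := 7) (by exact_mod_cast hs)⟩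
  have h8 : ¬IsSquare ((8 : ℤ) : ZMod 3) := by decide
  refine PadicInt.not_isSquare_intCast_add_prime_mul h8 t (PadicInt.isSquare_coe_iff.mp ⟨y, ?_⟩)
  rw [PadicInt.coe_add, PadicInt.coe_mul, PadicInt.coe_intCast, PadicInt.coe_natCast, ← sq, ← hy]
  norm_num [t]
end

section
/- Let R be a domain with fraction field K. Then the Pythagoras number of R is at least the Pythagoras number of K, i.e., if every sum of (n+1) squares in R is a sum of n squares in R, then every sum of (n+1) squares in K is a sum of n squares in K. -/
/-! Clear denominators: if `y = ∑ fᵢ²` in `K` and `b fᵢ = aᵢ ∈ R` for a common denominator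
`b ≠ 0`, then `b² y = ∑ aᵢ²` is a sum of `n` squares `∑ gᵢ²` in `R`, hence `y = ∑ (gᵢ / b)²`.
Only the invertibility of `b` in `K` matters, so this works in any localization of `R`. -/

open Finset

/-- `Σⁿ R² = Σⁿ⁺¹ R²`. -/
def SumSqFinSuccEqSumSqFin (R : Type*) [CommSemiring R] (n : ℕ) : Prop :=
  ∀ x : R, (∃ f : Fin (n + 1) → R, x = ∑ i, (f i) ^ 2) → ∃ g : Fin n → R, x = ∑ i, (g i) ^ 2

namespace IsLocalization

variable {R S : Type*} [CommSemiring R] [CommSemiring S] [Algebra R S]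

theorem exists_sum_sq_eq_sq_mul_sum_sq (M : Submonoid R) [IsLocalization M S] {ι : Type*}
    [Fintype ι] (f : ι → S) :
    ∃ b ∈ M, ∃ a : ι → R, algebraMap R S (∑ i, a i ^ 2) = algebraMap R S b ^ 2 * ∑ i, f i ^ 2 := by
  obtain ⟨b, hb⟩ := exist_integer_multiples M univ f
  choose a ha using fun i => hb i (mem_univ i)
  refine ⟨b, b.2, a, ?_⟩
  simp only [map_sum, map_pow, ha, mul_sum, Algebra.smul_def, mul_pow]

theorem sumSqFinSuccEqSumSqFin (M : Submonoid R) [IsLocalization M S] {n : ℕ}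
    (h : SumSqFinSuccEqSumSqFin R n) :
    SumSqFinSuccEqSumSqFin S n := by
  rintro y ⟨f, rfl⟩
  obtain ⟨b, hbM, a, ha⟩ := exists_sum_sq_eq_sq_mul_sum_sq M f
  obtain ⟨g, hg⟩ := h _ ⟨a, rfl⟩
  obtain ⟨u, hu⟩ := map_units S (⟨b, hbM⟩ : M)
  refine ⟨fun i => ↑u⁻¹ * algebraMap R S (g i), ?_⟩
  rw [hg, map_sum, ← hu] at ha
  calc ∑ i, f i ^ 2 = (↑u⁻¹ : S) ^ 2 * (↑u ^ 2 * ∑ i, f i ^ 2) := by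
        rw [← mul_assoc, ← mul_pow, Units.inv_mul, one_pow, one_mul]
    _ = ∑ i, (↑u⁻¹ * algebraMap R S (g i)) ^ 2 := by
        simp only [← ha, mul_sum, mul_pow, map_pow]

end IsLocalization

theorem pythagoras_number_fraction_field_le_general {R K : Type*} [CommRing R]
    [Field K] [Algebra R K] [IsFractionRing R K] (n : ℕ)
    (h : ∀ x : R, (∃ f : Fin (n + 1) → R, x = ∑ i, (f i) ^ 2) →
      ∃ g : Fin n → R, x = ∑ i, (g i) ^ 2) :
    ∀ y : K, (∃ f : Fin (n + 1) → K, y = ∑ i, (f i) ^ 2) →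
      ∃ g : Fin n → K, y = ∑ i, (g i) ^ 2 :=
  IsLocalization.sumSqFinSuccEqSumSqFin (nonZeroDivisors R) h

/-- For a domain `R` with fraction field `K`, the Pythagoras number of `R` is at
least that of `K`: if every sum of `n+1` squares in `R` is a sum of `n` squares
in `R`, then every sum of `n+1` squares in `K` is a sum of `n` squares in `K`. -/
theorem pythagoras_number_fraction_field_le {R K : Type*} [CommRing R] [IsDomain R]
    [Field K] [Algebra R K] [IsFractionRing R K] (n : ℕ)
    (h : ∀ x : R, (∃ f : Fin (n + 1) → R, x = ∑ i, (f i) ^ 2) →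
      ∃ g : Fin n → R, x = ∑ i, (g i) ^ 2) :
    ∀ y : K, (∃ f : Fin (n + 1) → K, y = ∑ i, (f i) ^ 2) →
      ∃ g : Fin n → K, y = ∑ i, (g i) ^ 2 :=
  pythagoras_number_fraction_field_le_general n h
end

section
/- Let K⁺ be the maximal totally real subfield of ℚ₃ and O its ring of integers. If α₁, α₂, α₃, α₄ ∈ O, then α₁² + α₂² + α₃² + α₄² is a sum of three squares of elements of O. Consequently P(O) = 3. -/
/-- An element of a ℚ-algebra is totally real if it is algebraic over ℚ and all
complex roots of its minimal polynomial are real. -/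
def TotallyReal {A : Type*} [Field A] [Algebra ℚ A] (x : A) : Prop :=
  IsAlgebraic ℚ x ∧ ∀ z : ℂ, Polynomial.aeval z (minpoly ℚ x) = 0 → z.im = 0

/-- `x` is a sum of `n` squares of elements of the subset `S`. -/
def IsSumOfSquaresIn {R : Type*} [CommRing R] (S : Set R) (n : ℕ) (x : R) : Prop :=
  ∃ f : Fin n → R, (∀ i, f i ∈ S) ∧ x = ∑ i, (f i) ^ 2

/-- The Pythagoras number of the set `S`: the least `n` with Σⁿ S² = Σⁿ⁺¹ S². -/
noncomputable def pythagorasNumberOf {R : Type*} [CommRing R] (S : Set R) : ℕ∞ :=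
  sInf ((fun n : ℕ => (n : ℕ∞)) ''
    {n | ∀ x, IsSumOfSquaresIn S n x ↔ IsSumOfSquaresIn S (n + 1) x})

def SqrtSumSqClosed {R : Type*} [CommRing R] (S : Set R) : Prop :=
  ∀ n γ, IsSumOfSquaresIn S n (γ ^ 2) → γ ∈ S

section SumsOfSquares

variable {R : Type*} [CommRing R] {S : Set R}

theorem SqrtSumSqClosed.zero_mem (hS : SqrtSumSqClosed S) : (0 : R) ∈ S :=
  hS 0 0 ⟨Fin.elim0, fun i => i.elim0, by simp⟩

theorem IsSumOfSquaresIn.succ (h0 : (0 : R) ∈ S) {n : ℕ} {x : R} (h : IsSumOfSquaresIn S n x) :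
    IsSumOfSquaresIn S (n + 1) x := by
  obtain ⟨f, hf, rfl⟩ := h
  exact ⟨Fin.cons 0 f, Fin.cases h0 hf, by simp [Fin.sum_univ_succ]⟩

theorem isSumOfSquaresIn_natCast (h1 : (1 : R) ∈ S) (n : ℕ) : IsSumOfSquaresIn S n n :=
  ⟨fun _ => 1, fun _ => h1, by simp⟩

theorem pythagorasNumberOf_eq {n : ℕ}
    (hn : ∀ x, IsSumOfSquaresIn S n x ↔ IsSumOfSquaresIn S (n + 1) x)
    (hlt : ∀ m < n, ∃ x, ¬(IsSumOfSquaresIn S m x ↔ IsSumOfSquaresIn S (m + 1) x)) :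
    pythagorasNumberOf S = n := by
  refine le_antisymm (sInf_le ⟨n, hn, rfl⟩) (le_sInf ?_)
  rintro _ ⟨m, hm, rfl⟩
  by_contra! h
  obtain ⟨x, hx⟩ := hlt m (by exact_mod_cast h)
  exact hx (hm x)

end SumsOfSquares

theorem Complex.im_eq_zero_of_sq_eq_ofReal {z : ℂ} {r : ℝ} (hr : 0 ≤ r) (h : z ^ 2 = r) :
    z.im = 0 := by
  have hre := congrArg Complex.re h
  have him := congrArg Complex.im h
  simp only [sq, Complex.mul_re, Complex.mul_im, Complex.ofReal_re, Complex.ofReal_im] at hre him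
  rcases mul_eq_zero.mp (show z.re * z.im = 0 by linarith) with h0 | h0
  · nlinarith
  · exact h0

/- Stated over an arbitrary base field: for `F = ℚ`, instance search would give
`algebraicClosure ℚ A` the algebra `DivisionRing.toRatAlgebra` rather than its intermediate-field
structure, and the embeddings would not be those of `range_eval_eq_rootSet_minpoly`. -/
theorem forall_root_minpoly_im_eq_zero_iff {F A : Type*} [Field F] [Field A] [Algebra F A]
    [Algebra F ℂ] (x : algebraicClosure F A) :
    (∀ z : ℂ, Polynomial.aeval z (minpoly F (x : A)) = 0 → z.im = 0) ↔
      ∀ σ : algebraicClosure F A →ₐ[F] ℂ, (σ x).im = 0 := by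
  have hroots := Algebra.IsAlgebraic.range_eval_eq_rootSet_minpoly (F := F) ℂ x
  rw [← IntermediateField.minpoly_eq]
  refine ⟨fun h σ => h _ ?_, fun h z hz => ?_⟩
  · rw [Polynomial.aeval_algHom_apply, minpoly.aeval, map_zero]
  · have : z ∈ (minpoly F x).rootSet ℂ :=
      (Polynomial.mem_rootSet).mpr ⟨minpoly.ne_zero (Algebra.IsIntegral.isIntegral x), hz⟩
    rw [← hroots] at this
    obtain ⟨σ, rfl⟩ := this
    exact h σ

section TotallyReal

variable {A : Type*} [Field A] [Algebra ℚ A]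

theorem totallyReal_one : TotallyReal (1 : A) :=
  ⟨isAlgebraic_one, by
    simpa using
      (forall_root_minpoly_im_eq_zero_iff (1 : algebraicClosure ℚ A)).mpr fun σ => by simp⟩

theorem sqrtSumSqClosed_totallyReal_isIntegral :
    SqrtSumSqClosed {x : A | TotallyReal x ∧ IsIntegral ℤ x} := by
  rintro n γ ⟨f, hf, hγ⟩
  have hγint : IsIntegral ℤ γ :=
    IsIntegral.of_pow two_pos (hγ ▸ IsIntegral.sum _ fun i _ => (hf i).2.pow 2)
  have hmem : ∀ {y : A}, IsIntegral ℤ y → y ∈ algebraicClosure ℚ A := fun hy =>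
    mem_algebraicClosure_iff'.mpr hy.tower_top
  set γ' : algebraicClosure ℚ A := ⟨γ, hmem hγint⟩
  set f' : Fin n → algebraicClosure ℚ A := fun i => ⟨f i, hmem (hf i).2⟩
  have hγ' : γ' ^ 2 = ∑ i, f' i ^ 2 := Subtype.ext (by push_cast; exact hγ)
  refine ⟨⟨(mem_algebraicClosure_iff.mp γ'.2), (forall_root_minpoly_im_eq_zero_iff γ').mpr
    fun σ => ?_⟩, hγint⟩
  have hreal : ∀ i, σ (f' i) = ((σ (f' i)).re : ℂ) := fun i =>
    Complex.ext rfl ((forall_root_minpoly_im_eq_zero_iff (f' i)).mp (hf i).1.2 σ)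
  refine Complex.im_eq_zero_of_sq_eq_ofReal (r := ∑ i, (σ (f' i)).re ^ 2) (by positivity) ?_
  rw [← map_pow, hγ', map_sum]
  push_cast
  exact Finset.sum_congr rfl fun i _ => by rw [map_pow, ← hreal]

end TotallyReal

namespace PadicInt

variable {p : ℕ} [Fact p.Prime]

theorem toZMod_eq_zero_iff_norm_lt_one {z : ℤ_[p]} : toZMod z = 0 ↔ ‖z‖ < 1 := by
  rw [← RingHom.mem_ker, ker_toZMod, IsLocalRing.mem_maximalIdeal, mem_nonunits]

theorem isSquare_of_toZMod_eq_one (hp : p ≠ 2) {u : ℤ_[p]} (hu : toZMod u = 1) : IsSquare u := by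
  have hnorm : ‖(Polynomial.X ^ 2 - Polynomial.C u).aeval (1 : ℤ_[p])‖ <
      ‖(Polynomial.derivative (Polynomial.X ^ 2 - Polynomial.C u)).aeval (1 : ℤ_[p])‖ ^ 2 := by
    have h2 : ‖(2 : ℤ_[p])‖ = 1 := by
      exact_mod_cast
        norm_natCast_eq_one_iff.mpr ((Nat.coprime_primes Fact.out Nat.prime_two).mpr hp)
    have h1 : ‖1 - u‖ < 1 := toZMod_eq_zero_iff_norm_lt_one.mp (by simp [hu])
    simpa [one_add_one_eq_two, h2] using h1
  obtain ⟨r, hr, -⟩ := hensels_lemma hnorm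
  exact ⟨r, by simpa [sub_eq_zero, sq, eq_comm] using hr⟩

theorem toZMod_sq_eq_one_of_isUnit {e : ℤ_[3]} (he : IsUnit e) : toZMod e ^ 2 = 1 :=
  ZMod.pow_card_sub_one_eq_one (he.map toZMod).ne_zero

theorem sq_ne_two (b : ℤ_[3]) : b ^ 2 ≠ 2 := by
  intro h
  have : ∀ t : ZMod 3, t ^ 2 ≠ 2 := by decide
  exact this _ (by simpa [map_ofNat] using congrArg toZMod h)

theorem sq_add_sq_ne_three (b c : ℤ_[3]) : b ^ 2 + c ^ 2 ≠ 3 := by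
  intro h
  have : ∀ s t : ZMod 9, s ^ 2 + t ^ 2 ≠ 3 := by decide
  exact this _ _ (by simpa [map_ofNat] using congrArg (toZModPow 2) h)

end PadicInt

namespace Padic

variable {p : ℕ} [Fact p.Prime]

theorem norm_le_one_of_isIntegral {x : ℚ_[p]} (hx : IsIntegral ℤ x) : ‖x‖ ≤ 1 := by
  obtain ⟨a, rfl⟩ := IsIntegrallyClosed.isIntegral_iff.mp (hx.tower_top (A := ℤ_[p]))
  exact a.norm_le_one

theorem isSquare_sq_add_sq_of_norm_lt (hp : p ≠ 2) {x y : ℚ_[p]} (h : ‖y‖ < ‖x‖) :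
    IsSquare (x ^ 2 + y ^ 2) := by
  have hx : x ≠ 0 := norm_pos_iff.mp ((norm_nonneg y).trans_lt h)
  have hyx : ‖y / x‖ < 1 := by rwa [norm_div, div_lt_one (norm_pos_iff.mpr hx)]
  let e : ℤ_[p] := ⟨y / x, hyx.le⟩
  have he : (e : ℚ_[p]) = y / x := rfl
  obtain ⟨r, hr⟩ := PadicInt.isSquare_of_toZMod_eq_one hp (u := 1 + e ^ 2)
    (by simp [PadicInt.toZMod_eq_zero_iff_norm_lt_one.mpr (show ‖e‖ < 1 from hyx)])
  have hr' : 1 + (y / x) ^ 2 = r * r := by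
    simpa [he] using congrArg ((↑) : ℤ_[p] → ℚ_[p]) hr
  refine ⟨x * r, ?_⟩
  calc x ^ 2 + y ^ 2 = x ^ 2 * (1 + (y / x) ^ 2) := by field_simp
    _ = x * r * (x * r) := by rw [hr']; ring

theorem isSquare_sq_add_sum_sq_of_norm_eq {n : ℕ} (hn : 3 ∣ n) {x : ℚ_[3]} {g : Fin n → ℚ_[3]}
    (hg : ∀ j, ‖g j‖ = ‖x‖) : IsSquare (x ^ 2 + ∑ j, g j ^ 2) := by
  rcases eq_or_ne x 0 with rfl | hx
  · simp_all
  have hgx : ∀ j, ‖g j / x‖ = 1 := fun j => by rw [norm_div, hg, div_self (norm_ne_zero_iff.mpr hx)]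
  let e : Fin n → ℤ_[3] := fun j => ⟨g j / x, (hgx j).le⟩
  have he : ∀ j, (e j : ℚ_[3]) = g j / x := fun j => rfl
  have hu : PadicInt.toZMod (1 + ∑ j, e j ^ 2) = 1 := by
    have he_sq : ∀ j, PadicInt.toZMod (e j) ^ 2 = 1 := fun j =>
      PadicInt.toZMod_sq_eq_one_of_isUnit (PadicInt.isUnit_iff.mpr (hgx j))
    simp [he_sq, (ZMod.natCast_eq_zero_iff n 3).mpr hn]
  obtain ⟨r, hr⟩ := PadicInt.isSquare_of_toZMod_eq_one (by norm_num) hu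
  have hr' : 1 + ∑ j, (g j / x) ^ 2 = r * r := by
    simpa [he] using congrArg ((↑) : ℤ_[3] → ℚ_[3]) hr
  refine ⟨x * r, ?_⟩
  calc x ^ 2 + ∑ j, g j ^ 2 = x ^ 2 * (1 + ∑ j, (g j / x) ^ 2) := by
        rw [mul_add, Finset.mul_sum]; field_simp
    _ = x * r * (x * r) := by rw [hr']; ring

theorem isSumOfSquaresIn_three_of_four {S : Set ℚ_[3]} (hS : SqrtSumSqClosed S) {x : ℚ_[3]}
    (h : IsSumOfSquaresIn S 4 x) : IsSumOfSquaresIn S 3 x := by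
  obtain ⟨f, hf, rfl⟩ := h
  obtain ⟨m, hm⟩ := Finite.exists_max fun i => ‖f i‖
  set g : Fin 3 → ℚ_[3] := fun k => f (m.succAbove k)
  have hg : ∀ k, g k ∈ S := fun k => hf _
  have hsum : ∑ i, f i ^ 2 = f m ^ 2 + ∑ k, g k ^ 2 := Fin.sum_univ_succAbove _ m
  by_cases hsmall : ∃ j, ‖g j‖ < ‖f m‖
  · obtain ⟨j, hj⟩ := hsmall
    obtain ⟨γ, hγ⟩ := isSquare_sq_add_sq_of_norm_lt (by norm_num) hj
    have hγS : γ ∈ S := hS 2 γ ⟨![f m, g j], fun i => by fin_cases i <;> simp [hf, hg],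
      by simp [← hγ, sq]⟩
    refine ⟨![γ, g (j.succAbove 0), g (j.succAbove 1)],
      fun i => by fin_cases i <;> simp [hγS, hg], ?_⟩
    rw [hsum, Fin.sum_univ_succAbove (fun k => g k ^ 2) j]
    simp only [Fin.sum_univ_two, Fin.sum_univ_three, Matrix.cons_val_zero, Matrix.cons_val_one,
      Matrix.cons_val_two, Matrix.head_cons, Matrix.tail_cons]
    linear_combination hγ
  · push Not at hsmall
    obtain ⟨γ, hγ⟩ := isSquare_sq_add_sum_sq_of_norm_eq (dvd_refl 3)
      fun j => le_antisymm (hm _) (hsmall j)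
    have hγ' : ∑ i, f i ^ 2 = γ ^ 2 := (hsum.trans hγ).trans (sq γ).symm
    refine ⟨![γ, 0, 0], fun i => by fin_cases i <;> simp [hS 4 γ ⟨f, hf, hγ'.symm⟩, hS.zero_mem],
      by simp [Fin.sum_univ_succ, hγ']⟩

theorem not_isSumOfSquaresIn_natCast_succ {S : Set ℚ_[3]} (hS : ∀ x ∈ S, ‖x‖ ≤ 1) {m : ℕ}
    (hm : m < 3) : ¬IsSumOfSquaresIn S m ((m + 1 : ℕ) : ℚ_[3]) := by
  rintro ⟨f, hf, h⟩
  let b : Fin m → ℤ_[3] := fun i => ⟨f i, hS _ (hf i)⟩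
  have hb : ((m + 1 : ℕ) : ℤ_[3]) = ∑ i, b i ^ 2 := by
    apply Subtype.ext; rw [PadicInt.coe_sum]; push_cast at h ⊢; exact h
  interval_cases m
  · simp at hb
  · exact PadicInt.sq_ne_two _ (by simpa using hb.symm)
  · exact PadicInt.sq_add_sq_ne_three _ _ (by simpa [Fin.sum_univ_two] using hb.symm)

end Padic

/-- Let `O` be the ring of integers of the maximal totally real subfield of
`ℚ₃`, i.e. the set of totally real algebraic integers in `ℚ₃`. Then every sum
of four squares in `O` is a sum of three squares in `O`, and `P(O) = 3`. -/
theorem pythagoras_three_for_totally_real_integers_of_Qp3 :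
    (∀ α : Fin 4 → ℚ_[3], (∀ i, TotallyReal (α i) ∧ IsIntegral ℤ (α i)) →
      ∃ β : Fin 3 → ℚ_[3], (∀ i, TotallyReal (β i) ∧ IsIntegral ℤ (β i)) ∧
        α 0 ^ 2 + α 1 ^ 2 + α 2 ^ 2 + α 3 ^ 2 = β 0 ^ 2 + β 1 ^ 2 + β 2 ^ 2) ∧
    pythagorasNumberOf {x : ℚ_[3] | TotallyReal x ∧ IsIntegral ℤ x} = 3 := by
  set O := {x : ℚ_[3] | TotallyReal x ∧ IsIntegral ℤ x}
  have hO : SqrtSumSqClosed O := sqrtSumSqClosed_totallyReal_isIntegral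
  have hO₁ : (1 : ℚ_[3]) ∈ O := ⟨totallyReal_one, isIntegral_one⟩
  have hO_norm : ∀ x ∈ O, ‖x‖ ≤ 1 := fun _ hx => Padic.norm_le_one_of_isIntegral hx.2
  have four_to_three : ∀ x, IsSumOfSquaresIn O 4 x → IsSumOfSquaresIn O 3 x :=
    fun _ => Padic.isSumOfSquaresIn_three_of_four hO
  refine ⟨fun α hα => ?_, pythagorasNumberOf_eq
    (fun x => ⟨IsSumOfSquaresIn.succ hO.zero_mem, four_to_three x⟩) fun m hm => ⟨(m + 1 : ℕ), ?_⟩⟩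
  · obtain ⟨β, hβ, h⟩ := four_to_three _ ⟨α, hα, rfl⟩
    exact ⟨β, hβ, by simpa [Fin.sum_univ_succ, add_assoc] using h⟩
  · exact fun h => Padic.not_isSumOfSquaresIn_natCast_succ hO_norm hm
      (h.mpr (isSumOfSquaresIn_natCast hO₁ _))
end

section
/- Let p be an odd prime and n ≥ 1. The set {1, ω(1), ω(2), ..., ω((p−1)/2 · p^{n−1} − 1)}, where ω(k) = ζ_{p^n}^k + ζ_{p^n}^{−k}, is a ℤ-basis of the ring of integers of the maximal real subfield K_{p^n}^+ = ℚ(ζ_{p^n} + ζ_{p^n}^{−1}) of the p^n-th cyclotomic field. -/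
/-!
An algebraic integer `x` of `ℚ(θ)`, `θ = ζ + ζ⁻¹`, lies in `ℤ[ζ] = ℤ[θ] + ℤ[θ] ζ` (as
`ζ² = θ ζ - 1`); writing `x = a + b ζ`, complex conjugation fixes `x`, `a`, `b` and sends `ζ` to
`ζ⁻¹ ≠ ζ`, so `b = 0` and `x ∈ ℤ[θ]`.

With `N = pⁿ = (2h + 1) q`, `q = pⁿ⁻¹` and `d = h q`, write `ω(s) = ζ^s + ζ^{-s}`. The `ℤ`-span of
`1, ω(1), …, ω(d - 1)` contains every `ω(s)`: reduce `s` into `(-d - q, d + q)` modulo `N`, and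
use `ω(-s) = ω(s)` together with `∑_{i < p} ω(t + i q) = 0` (the `p`-th roots of unity `ζ^{iq}`
sum to zero). As `θ ω(s) = ω(s + 1) + ω(s - 1)`, the span is stable under multiplication by `θ`
and hence contains `ℤ[θ]`. The family is free: `ζ^d` times a vanishing combination is a
polynomial in `ζ` of degree `< 2d = φ(N)`.
-/

open Polynomial Finset IntermediateField

def realCyclotomicFamily {K : Type*} [Field K] (ζ : K) (d : ℕ) (k : Fin d) : K :=
  if (k : ℕ) = 0 then 1 else ζ ^ (k : ℕ) + ζ⁻¹ ^ (k : ℕ)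

section Field

variable {K : Type*} [Field K] {ζ : K}

lemma zpow_add_zpow_neg_natCast (k : ℕ) : ζ ^ (k : ℤ) + ζ ^ (-(k : ℤ)) = ζ ^ k + ζ⁻¹ ^ k := by
  rw [zpow_neg, zpow_natCast, inv_pow]

lemma zpow_add_zpow_neg_natAbs (s : ℤ) :
    ζ ^ (s.natAbs : ℤ) + ζ ^ (-(s.natAbs : ℤ)) = ζ ^ s + ζ ^ (-s) := by
  obtain ⟨k, rfl | rfl⟩ := Int.eq_nat_or_neg s
  · rfl
  · rw [Int.natAbs_neg, Int.natAbs_natCast, neg_neg, add_comm]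

lemma mul_pow_add_inv_pow_succ (hζ : ζ ≠ 0) (m : ℕ) :
    (ζ + ζ⁻¹) * (ζ ^ (m + 1) + ζ⁻¹ ^ (m + 1)) =
      (ζ ^ (m + 2) + ζ⁻¹ ^ (m + 2)) + (ζ ^ m + ζ⁻¹ ^ m) := by
  linear_combination (ζ ^ m + ζ⁻¹ ^ m) * mul_inv_cancel₀ hζ

lemma pow_add_inv_pow_mem_adjoin (hζ : ζ ≠ 0) (k : ℕ) :
    ζ ^ k + ζ⁻¹ ^ k ∈ Algebra.adjoin ℤ {ζ + ζ⁻¹} := by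
  induction k using Nat.twoStepInduction with
  | zero =>
    rw [pow_zero, pow_zero, one_add_one_eq_two]
    exact ofNat_mem _ 2
  | one =>
    rw [pow_one, pow_one]
    exact Algebra.self_mem_adjoin_singleton ℤ _
  | more m h₀ h₁ =>
    rw [eq_sub_of_add_eq (mul_pow_add_inv_pow_succ hζ m).symm]
    exact sub_mem (mul_mem (Algebra.self_mem_adjoin_singleton ℤ _) h₁) h₀

lemma realCyclotomicFamily_mem_adjoin (hζ : ζ ≠ 0) {d : ℕ} (k : Fin d) :
    realCyclotomicFamily ζ d k ∈ Algebra.adjoin ℤ {ζ + ζ⁻¹} := by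
  unfold realCyclotomicFamily
  split_ifs
  exacts [one_mem _, pow_add_inv_pow_mem_adjoin hζ k]

lemma exists_add_mul_of_mem_adjoin (hζ : ζ ≠ 0) {x : K} (hx : x ∈ Algebra.adjoin ℤ {ζ}) :
    ∃ a ∈ Algebra.adjoin ℤ {ζ + ζ⁻¹}, ∃ b ∈ Algebra.adjoin ℤ {ζ + ζ⁻¹}, x = a + b * ζ := by
  have hθ : ζ + ζ⁻¹ ∈ Algebra.adjoin ℤ {ζ + ζ⁻¹} := Algebra.self_mem_adjoin_singleton ℤ _
  induction hx using Algebra.adjoin_induction with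
  | mem y hy =>
    rw [Set.mem_singleton_iff.mp hy]
    exact ⟨0, zero_mem _, 1, one_mem _, by ring⟩
  | algebraMap r => exact ⟨algebraMap ℤ K r, Subalgebra.algebraMap_mem _ r, 0, zero_mem _, by ring⟩
  | add u v _ _ hu hv =>
    obtain ⟨a, ha, b, hb, rfl⟩ := hu
    obtain ⟨a', ha', b', hb', rfl⟩ := hv
    exact ⟨a + a', add_mem ha ha', b + b', add_mem hb hb', by ring⟩
  | mul u v _ _ hu hv =>
    obtain ⟨a, ha, b, hb, rfl⟩ := hu
    obtain ⟨a', ha', b', hb', rfl⟩ := hv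
    refine ⟨a * a' - b * b', sub_mem (mul_mem ha ha') (mul_mem hb hb'),
      a * b' + b * a' + b * b' * (ζ + ζ⁻¹),
      add_mem (add_mem (mul_mem ha hb') (mul_mem hb ha')) (mul_mem (mul_mem hb hb') hθ), ?_⟩
    linear_combination (-(b * b')) * mul_inv_cancel₀ hζ

lemma IsPrimitiveRoot.sum_zpow_add_mul_eq_zero {p q : ℕ} (hζ : IsPrimitiveRoot ζ (p * q))
    (hp : 1 < p) (hq : 0 < q) (t : ℤ) : ∑ i ∈ range p, ζ ^ (t + i * q) = 0 := by
  have hζ0 : ζ ≠ 0 := hζ.ne_zero (by positivity)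
  have hμ : IsPrimitiveRoot (ζ ^ q) p := hζ.pow (by positivity) (mul_comm _ _)
  calc ∑ i ∈ range p, ζ ^ (t + i * q) = ζ ^ t * ∑ i ∈ range p, (ζ ^ q) ^ i := by
        rw [mul_sum]
        refine sum_congr rfl fun i _ => ?_
        rw [zpow_add₀ hζ0, ← Nat.cast_mul, zpow_natCast, mul_comm i q, pow_mul]
    _ = 0 := by rw [hμ.geom_sum_eq_zero hp, mul_zero]

lemma IsPrimitiveRoot.sum_zpow_add_zpow_neg_eq_zero {p q : ℕ} (hζ : IsPrimitiveRoot ζ (p * q))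
    (hp : 1 < p) (hq : 0 < q) (t : ℤ) :
    ∑ i ∈ range p, (ζ ^ (t + i * q) + ζ ^ (-(t + i * q))) = 0 := by
  simp_rw [sum_add_distrib, zpow_neg, ← inv_zpow]
  rw [hζ.sum_zpow_add_mul_eq_zero hp hq, hζ.inv.sum_zpow_add_mul_eq_zero hp hq, add_zero]

lemma IsPrimitiveRoot.one_add_sum_pow_add_inv_pow_eq_zero {h : ℕ}
    (hζ : IsPrimitiveRoot ζ (2 * h + 1)) (hh : 0 < h) :
    1 + ∑ i ∈ range h, (ζ ^ (i + 1) + ζ⁻¹ ^ (i + 1)) = 0 := by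
  have hgeom := hζ.geom_sum_eq_zero (by omega)
  rw [show 2 * h + 1 = h + 1 + h by ring, sum_range_add, sum_range_succ'] at hgeom
  have hrefl : ∑ j ∈ range h, ζ ^ (h + 1 + j) = ∑ i ∈ range h, ζ⁻¹ ^ (i + 1) := by
    rw [← sum_range_reflect]
    refine sum_congr rfl fun j hj => ?_
    rw [inv_pow]
    refine eq_inv_of_mul_eq_one_left ?_
    rw [← pow_add]
    convert hζ.pow_eq_one using 2
    have := mem_range.mp hj
    omega
  rw [sum_add_distrib, ← hrefl, ← hgeom]
  ring

section Span

variable {h q : ℕ}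

lemma one_mem_span_realCyclotomicFamily {d : ℕ} (hd : 0 < d) :
    (1 : K) ∈ Submodule.span ℤ (Set.range (realCyclotomicFamily ζ d)) :=
  Submodule.subset_span ⟨⟨0, hd⟩, if_pos rfl⟩

lemma pow_add_inv_pow_mem_span_of_lt {d k : ℕ} (hk : k < d) :
    ζ ^ k + ζ⁻¹ ^ k ∈ Submodule.span ℤ (Set.range (realCyclotomicFamily ζ d)) := by
  rcases k.eq_zero_or_pos with rfl | hk0
  · rw [pow_zero, pow_zero, ← two_zsmul]
    exact Submodule.smul_mem _ 2 (one_mem_span_realCyclotomicFamily hk)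
  · exact Submodule.subset_span ⟨⟨k, hk⟩, if_neg hk0.ne'⟩

lemma zpow_add_zpow_neg_mem_span_of_natAbs_lt {d : ℕ} {s : ℤ} (hs : s.natAbs < d) :
    ζ ^ s + ζ ^ (-s) ∈ Submodule.span ℤ (Set.range (realCyclotomicFamily ζ d)) := by
  rw [← zpow_add_zpow_neg_natAbs, zpow_add_zpow_neg_natCast]
  exact pow_add_inv_pow_mem_span_of_lt hs

lemma pow_add_inv_pow_mem_span_self (hζ : IsPrimitiveRoot ζ ((2 * h + 1) * q)) (hh : 0 < h)
    (hq : 0 < q) : ζ ^ (h * q) + ζ⁻¹ ^ (h * q) ∈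
      Submodule.span ℤ (Set.range (realCyclotomicFamily ζ (h * q))) := by
  have hμ : IsPrimitiveRoot (ζ ^ q) (2 * h + 1) := hζ.pow (by positivity) (mul_comm _ _)
  have hsum := hμ.one_add_sum_pow_add_inv_pow_eq_zero hh
  obtain ⟨h, rfl⟩ : ∃ h', h = h' + 1 := ⟨h - 1, by omega⟩
  rw [sum_range_succ] at hsum
  have hω : (ζ ^ q) ^ (h + 1) + (ζ ^ q)⁻¹ ^ (h + 1) =
      -1 - ∑ i ∈ range h, ((ζ ^ q) ^ (i + 1) + (ζ ^ q)⁻¹ ^ (i + 1)) := by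
    linear_combination hsum
  rw [pow_mul', pow_mul', inv_pow ζ q, hω]
  refine sub_mem (neg_mem (one_mem_span_realCyclotomicFamily (by positivity)))
    (Submodule.sum_mem _ fun i hi => ?_)
  rw [← inv_pow, ← pow_mul', ← pow_mul']
  exact pow_add_inv_pow_mem_span_of_lt
    (Nat.mul_lt_mul_of_pos_right (by simpa using mem_range.mp hi) hq)

lemma pow_add_inv_pow_mem_span_of_mul_lt (hζ : IsPrimitiveRoot ζ ((2 * h + 1) * q)) (hh : 0 < h)
    (hq : 0 < q) {k : ℕ} (hk₁ : h * q < k) (hk₂ : k < h * q + q) :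
    ζ ^ k + ζ⁻¹ ^ k ∈ Submodule.span ℤ (Set.range (realCyclotomicFamily ζ (h * q))) := by
  have hrel := hζ.sum_zpow_add_zpow_neg_eq_zero (by omega) hq (-k)
  rw [sum_range_succ'] at hrel
  have hω : ζ ^ (k : ℤ) + ζ ^ (-(k : ℤ)) = -∑ i ∈ range (2 * h),
      (ζ ^ (-(k : ℤ) + (i + 1 : ℕ) * q) + ζ ^ (-(-(k : ℤ) + (i + 1 : ℕ) * q))) := by
    simp only [Nat.cast_zero, zero_mul, add_zero, neg_neg] at hrel
    linear_combination hrel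
  rw [← zpow_add_zpow_neg_natCast, hω]
  refine neg_mem (Submodule.sum_mem _ fun i hi => zpow_add_zpow_neg_mem_span_of_natAbs_lt ?_)
  have hi := mem_range.mp hi
  have h₁ : (q : ℤ) ≤ (i + 1) * q := le_mul_of_one_le_left (by positivity) (by omega)
  have h₂ : ((i : ℤ) + 1) * q ≤ 2 * (h * q) := by
    rw [← mul_assoc]
    exact mul_le_mul_of_nonneg_right (by omega) (by positivity)
  push_cast
  omega

lemma pow_add_inv_pow_mem_span (hζ : IsPrimitiveRoot ζ ((2 * h + 1) * q)) (hh : 0 < h)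
    (hq : 0 < q) (k : ℕ) :
    ζ ^ k + ζ⁻¹ ^ k ∈ Submodule.span ℤ (Set.range (realCyclotomicFamily ζ (h * q))) := by
  set N := (2 * h + 1) * q
  have hN : 0 < N := by positivity
  set r := Int.bmod k N
  have hkr : ζ ^ (k : ℤ) = ζ ^ r := by
    have hdvd : (N : ℤ) ∣ k - r := Int.ModEq.dvd Int.bmod_emod
    rw [← sub_add_cancel (k : ℤ) r, zpow_add₀ (hζ.ne_zero hN.ne'),
      (hζ.zpow_eq_one_iff_dvd _).mpr hdvd, one_mul]
  have hr₁ := Int.le_bmod (x := k) hN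
  have hr₂ := Int.bmod_lt (x := k) hN
  have hN' : (N : ℤ) = 2 * (h * q : ℕ) + q := by simp only [N]; push_cast; ring
  rw [← zpow_add_zpow_neg_natCast, zpow_neg, hkr, ← zpow_neg, ← zpow_add_zpow_neg_natAbs,
    zpow_add_zpow_neg_natCast]
  rcases lt_trichotomy r.natAbs (h * q) with hlt | heq | hgt
  · exact pow_add_inv_pow_mem_span_of_lt hlt
  · rw [heq]
    exact pow_add_inv_pow_mem_span_self hζ hh hq
  · exact pow_add_inv_pow_mem_span_of_mul_lt hζ hh hq hgt (by omega)

lemma mul_mem_span_realCyclotomicFamily (hζ : IsPrimitiveRoot ζ ((2 * h + 1) * q)) (hh : 0 < h)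
    (hq : 0 < q) {x : K} (hx : x ∈ Submodule.span ℤ (Set.range (realCyclotomicFamily ζ (h * q)))) :
    (ζ + ζ⁻¹) * x ∈ Submodule.span ℤ (Set.range (realCyclotomicFamily ζ (h * q))) := by
  have hζ0 : ζ ≠ 0 := hζ.ne_zero (by positivity)
  set S := Submodule.span ℤ (Set.range (realCyclotomicFamily ζ (h * q)))
  suffices hS : S ≤ S.comap (LinearMap.mulLeft ℤ (ζ + ζ⁻¹)) from hS hx
  rw [Submodule.span_le]
  rintro _ ⟨k, rfl⟩
  simp only [SetLike.mem_coe, Submodule.mem_comap, LinearMap.mulLeft_apply, realCyclotomicFamily]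
  split_ifs with hk
  · simpa using pow_add_inv_pow_mem_span hζ hh hq 1
  · obtain ⟨m, hm⟩ := Nat.exists_eq_add_of_lt (Nat.pos_of_ne_zero hk)
    rw [hm, zero_add, mul_pow_add_inv_pow_succ hζ0]
    exact add_mem (pow_add_inv_pow_mem_span hζ hh hq _) (pow_add_inv_pow_mem_span hζ hh hq _)

lemma adjoin_le_span_realCyclotomicFamily (hζ : IsPrimitiveRoot ζ ((2 * h + 1) * q)) (hh : 0 < h)
    (hq : 0 < q) : Subalgebra.toSubmodule (Algebra.adjoin ℤ {ζ + ζ⁻¹}) ≤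
      Submodule.span ℤ (Set.range (realCyclotomicFamily ζ (h * q))) := by
  rw [Algebra.adjoin_eq_span, Submodule.span_le]
  intro _ hy
  obtain ⟨m, rfl⟩ := Submonoid.mem_closure_singleton.mp hy
  clear hy
  induction m with
  | zero => exact pow_zero (ζ + ζ⁻¹) ▸ one_mem_span_realCyclotomicFamily (by positivity)
  | succ m ih => exact pow_succ' (ζ + ζ⁻¹) m ▸ mul_mem_span_realCyclotomicFamily hζ hh hq ih

end Span

lemma IsPrimitiveRoot.eq_zero_of_aeval_eq_zero [CharZero K] {N : ℕ} (hζ : IsPrimitiveRoot ζ N)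
    (hN : 0 < N) {P : ℚ[X]} (hP : aeval ζ P = 0) (hdeg : P.natDegree < N.totient) : P = 0 := by
  by_contra hP0
  have := natDegree_le_natDegree (minpoly.degree_le_of_ne_zero ℚ ζ hP0 hP)
  rw [← cyclotomic_eq_minpoly_rat hζ hN, natDegree_cyclotomic] at this
  omega

/-- `X ^ d` times the Laurent polynomial `X ^ k + X ^ (-k)`, or times `1` when `k = 0`. -/
noncomputable def realCyclotomicPoly (d : ℕ) (k : Fin d) : ℚ[X] :=
  X ^ (d + k) + if (k : ℕ) = 0 then 0 else X ^ (d - k)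

lemma aeval_realCyclotomicPoly [CharZero K] {d : ℕ} (hζ : ζ ≠ 0) (k : Fin d) :
    aeval ζ (realCyclotomicPoly d k) = ζ ^ d * realCyclotomicFamily ζ d k := by
  unfold realCyclotomicPoly realCyclotomicFamily
  split_ifs with hk
  · simp [hk]
  · rw [map_add, map_pow, map_pow, aeval_X, mul_add, ← pow_add, inv_pow,
      ← pow_sub₀ _ hζ k.2.le]

lemma natDegree_realCyclotomicPoly_le {d : ℕ} (k : Fin d) :
    (realCyclotomicPoly d k).natDegree ≤ 2 * d - 1 := by
  have := k.2
  refine natDegree_add_le_of_degree_le ?_ ?_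
  · rw [natDegree_X_pow]
    omega
  · split_ifs
    · simp
    · rw [natDegree_X_pow]
      omega

lemma coeff_realCyclotomicPoly {d : ℕ} (k j : Fin d) :
    (realCyclotomicPoly d k).coeff (d + j) = if k = j then 1 else 0 := by
  have := j.2
  simp only [realCyclotomicPoly, coeff_add, coeff_X_pow, apply_ite (coeff · (d + j)), coeff_zero,
    Fin.ext_iff]
  split_ifs <;> simp_all <;> omega

lemma linearIndependent_realCyclotomicFamily [CharZero K] {N d : ℕ} (hζ : IsPrimitiveRoot ζ N)
    (hN : 0 < N) (hd : N.totient = 2 * d) : LinearIndependent ℤ (realCyclotomicFamily ζ d) := by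
  rw [Fintype.linearIndependent_iff]
  intro c hc j
  set P : ℚ[X] := ∑ k, C (c k : ℚ) * realCyclotomicPoly d k
  have hPζ : aeval ζ P = 0 := calc
    aeval ζ P = ζ ^ d * ∑ k, c k • realCyclotomicFamily ζ d k := by
      simp only [P, map_sum, map_mul, aeval_realCyclotomicPoly (hζ.ne_zero hN.ne'), mul_sum,
        zsmul_eq_mul, map_intCast]
      exact sum_congr rfl fun k _ => mul_left_comm _ _ _
    _ = 0 := by rw [hc, mul_zero]
  have hdeg : P.natDegree < N.totient := by
    have := j.2
    refine (natDegree_sum_le_of_forall_le _ _ (n := 2 * d - 1) fun k _ => ?_).trans_lt (by omega)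
    exact (natDegree_C_mul_le _ _).trans (natDegree_realCyclotomicPoly_le k)
  have hcoeff := Polynomial.ext_iff.mp (hζ.eq_zero_of_aeval_eq_zero hN hPζ hdeg) (d + j)
  simp only [P, finsetSum_coeff, coeff_C_mul, coeff_realCyclotomicPoly] at hcoeff
  simpa using hcoeff

lemma mem_adjoin_simple_of_mem_adjoin_int [CharZero K] {x y : K} (hx : x ∈ Algebra.adjoin ℤ {y}) :
    x ∈ ℚ⟮y⟯ :=
  Algebra.adjoin_le (S := ℚ⟮y⟯.toSubalgebra.restrictScalars ℤ)
    (Set.singleton_subset_iff.mpr (mem_adjoin_simple_self ℚ y)) hx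

lemma IsPrimitiveRoot.mem_adjoin_int_of_isIntegral [CharZero K] {N : ℕ} [NeZero N]
    (hζ : IsPrimitiveRoot ζ N) {x : K} (hx : x ∈ ℚ⟮ζ⟯) (hint : IsIntegral ℤ x) :
    x ∈ Algebra.adjoin ℤ {ζ} := by
  have hcycl := (isCyclotomicExtension_singleton_iff_eq_adjoin N ℚ K ℚ⟮ζ⟯ hζ).mpr rfl
  let ζ' : ℚ⟮ζ⟯ := ⟨ζ, mem_adjoin_simple_self ℚ ζ⟩
  have hζ' : IsPrimitiveRoot ζ' N := IsPrimitiveRoot.coe_submonoidClass_iff.mp hζ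
  have hint' : IsIntegral ℤ (⟨x, hx⟩ : ℚ⟮ζ⟯) :=
    (isIntegral_algHom_iff ((val ℚ⟮ζ⟯).restrictScalars ℤ) Subtype.val_injective).mp hint
  obtain ⟨y, hy⟩ := (IsCyclotomicExtension.Rat.isIntegralClosure_adjoin_singleton (hcycl := hcycl)
    hζ').isIntegral_iff.mp hint'
  have hmap : x ∈ (Algebra.adjoin ℤ {ζ'}).map ((val ℚ⟮ζ⟯).restrictScalars ℤ) :=
    ⟨⟨x, hx⟩, hy ▸ y.2, rfl⟩
  rwa [AlgHom.map_adjoin, Set.image_singleton] at hmap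

end Field

lemma existsUnique_eq_sum_intCast_mul {ι A : Type*} [Fintype ι] [Ring A] {v : ι → A}
    (hv : LinearIndependent ℤ v) {x : A} (hx : x ∈ Submodule.span ℤ (Set.range v)) :
    ∃! c : ι → ℤ, x = ∑ i, (c i : A) * v i := by
  obtain ⟨c, hc⟩ := (Submodule.mem_span_range_iff_exists_fun ℤ).mp hx
  simp_rw [zsmul_eq_mul] at hc
  refine ⟨c, hc.symm, fun c' hc' => funext fun i => ?_⟩
  have := Fintype.linearIndependent_iff.mp hv (c' - c) (by
    simp_rw [Pi.sub_apply, sub_smul, sum_sub_distrib, zsmul_eq_mul, ← hc', hc, sub_self])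
  exact sub_eq_zero.mp (this i)

lemma conj_eq_self_of_mem_adjoin {ζ x : ℂ} (hζ : starRingEnd ℂ ζ = ζ⁻¹) (hx : x ∈ ℚ⟮ζ + ζ⁻¹⟯) :
    starRingEnd ℂ x = x := by
  have hθ : ζ + ζ⁻¹ ∈ (Complex.ofRealAm.restrictScalars ℚ).fieldRange := by
    refine AlgHom.mem_fieldRange.mpr
      ⟨(ζ + ζ⁻¹).re, (Complex.conj_eq_iff_re (z := ζ + ζ⁻¹)).mp ?_⟩
    rw [map_add, map_inv₀, hζ, inv_inv, add_comm]
  obtain ⟨r, rfl⟩ := adjoin_simple_le_iff.mpr hθ hx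
  exact Complex.conj_ofReal r

lemma IsPrimitiveRoot.mem_adjoin_add_inv_of_isIntegral {ζ : ℂ} {N : ℕ} (hζ : IsPrimitiveRoot ζ N)
    (hN : 2 < N) {x : ℂ} (hx : x ∈ ℚ⟮ζ + ζ⁻¹⟯) (hint : IsIntegral ℤ x) :
    x ∈ Algebra.adjoin ℤ {ζ + ζ⁻¹} := by
  have : NeZero N := ⟨by omega⟩
  have hζ0 : ζ ≠ 0 := hζ.ne_zero (NeZero.ne N)
  have hconj : starRingEnd ℂ ζ = ζ⁻¹ := (Complex.inv_eq_conj (hζ.norm'_eq_one (NeZero.ne N))).symm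
  have hsub : ℚ⟮ζ + ζ⁻¹⟯ ≤ ℚ⟮ζ⟯ := adjoin_simple_le_iff.mpr
    (add_mem (mem_adjoin_simple_self ℚ ζ) (inv_mem (mem_adjoin_simple_self ℚ ζ)))
  obtain ⟨a, ha, b, hb, rfl⟩ :=
    exists_add_mul_of_mem_adjoin hζ0 (hζ.mem_adjoin_int_of_isIntegral (hsub hx) hint)
  have hreal := conj_eq_self_of_mem_adjoin hconj hx
  rw [map_add, map_mul, conj_eq_self_of_mem_adjoin hconj (mem_adjoin_simple_of_mem_adjoin_int ha),
    conj_eq_self_of_mem_adjoin hconj (mem_adjoin_simple_of_mem_adjoin_int hb), hconj] at hreal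
  have hζinv : ζ⁻¹ ≠ ζ := by
    intro h
    have h2 : ζ ^ 2 = 1 := by rw [sq]; nth_rewrite 1 [← h]; exact inv_mul_cancel₀ hζ0
    have := Nat.le_of_dvd two_pos ((hζ.pow_eq_one_iff_dvd 2).mp h2)
    omega
  have hb0 : b = 0 := by
    by_contra hb0
    exact hζinv (mul_left_cancel₀ hb0 (add_left_cancel hreal))
  rwa [hb0, zero_mul, add_zero]

/-- Let `p` be an odd prime and `n ≥ 1`. With `ζ = e^{2πi/pⁿ}` and
`ω(k) = ζ^k + ζ^{-k}`, the family `{1, ω(1), …, ω((p-1)/2·p^{n-1} - 1)}` is a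
ℤ-basis of the ring of integers of the maximal real subfield
`K_{pⁿ}⁺ = ℚ(ζ + ζ⁻¹)`: each member is such an integer, and every such integer
is a unique ℤ-linear combination of them. -/
theorem real_cyclotomic_integer_basis (p n : ℕ) (hp : p.Prime) (hodd : Odd p) (hn : 1 ≤ n) :
    (∀ k : Fin ((p - 1) * p ^ (n - 1) / 2),
      (if (k : ℕ) = 0 then (1 : ℂ) else
        Complex.exp (2 * Real.pi * Complex.I / (p ^ n)) ^ (k : ℕ)
          + (Complex.exp (2 * Real.pi * Complex.I / (p ^ n)))⁻¹ ^ (k : ℕ)) ∈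
      {x : ℂ | x ∈ IntermediateField.adjoin ℚ
          {Complex.exp (2 * Real.pi * Complex.I / (p ^ n))
            + (Complex.exp (2 * Real.pi * Complex.I / (p ^ n)))⁻¹} ∧ IsIntegral ℤ x}) ∧
    (∀ x ∈ {x : ℂ | x ∈ IntermediateField.adjoin ℚ
          {Complex.exp (2 * Real.pi * Complex.I / (p ^ n))
            + (Complex.exp (2 * Real.pi * Complex.I / (p ^ n)))⁻¹} ∧ IsIntegral ℤ x},
      ∃! c : Fin ((p - 1) * p ^ (n - 1) / 2) → ℤ,
        x = ∑ k, (c k : ℂ) *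
          (if (k : ℕ) = 0 then (1 : ℂ) else
            Complex.exp (2 * Real.pi * Complex.I / (p ^ n)) ^ (k : ℕ)
              + (Complex.exp (2 * Real.pi * Complex.I / (p ^ n)))⁻¹ ^ (k : ℕ))) := by
  obtain ⟨h, rfl⟩ := hodd
  set q := (2 * h + 1) ^ (n - 1)
  have hh : 0 < h := by have := hp.two_le; omega
  have hq : 0 < q := by positivity
  have hN : (2 * h + 1) ^ n = (2 * h + 1) * q := by rw [← pow_succ', Nat.sub_add_cancel hn]
  have hd : (2 * h + 1 - 1) * q / 2 = h * q := by
    rw [Nat.add_sub_cancel, mul_assoc, Nat.mul_div_cancel_left _ two_pos]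
  have htot : ((2 * h + 1) * q).totient = 2 * (h * q) := by
    rw [← hN, Nat.totient_prime_pow hp (by omega), Nat.add_sub_cancel]
    ring
  set ζ := Complex.exp (2 * Real.pi * Complex.I / ((2 * h + 1 : ℕ) : ℂ) ^ n)
  have hζ : IsPrimitiveRoot ζ ((2 * h + 1) * q) := by
    rw [← hN]
    simpa only [ζ, Nat.cast_pow] using Complex.isPrimitiveRoot_exp ((2 * h + 1) ^ n) (by positivity)
  have hθ : IsIntegral ℤ (ζ + ζ⁻¹) :=
    (hζ.isIntegral (by positivity)).add (hζ.inv.isIntegral (by positivity))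
  rw [hd]
  refine ⟨fun k => ?_, fun x hx => ?_⟩
  · have hk := realCyclotomicFamily_mem_adjoin (hζ.ne_zero (by positivity)) k
    exact ⟨mem_adjoin_simple_of_mem_adjoin_int hk, adjoin_le_integralClosure hθ hk⟩
  · have hx' := hζ.mem_adjoin_add_inv_of_isIntegral (by nlinarith) hx.1 hx.2
    exact existsUnique_eq_sum_intCast_mul
      (linearIndependent_realCyclotomicFamily hζ (by positivity) htot)
      (adjoin_le_span_realCyclotomicFamily hζ hh hq hx')
end
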